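/- Let n ≥ 2 and let G be the Sobolev metric of order n with constant coefficients a_0,…,a_n ≥ 0, a_0 > 0, a_n > 0, on smooth 2π-periodic immersions into ℝ^d. Then there exists a constant C₁ ≥ 1 such that for every smooth 2π-periodic immersion c and every smooth 2π-periodic h : ℝ → ℝ^d one has C₁^{−1}·‖h‖_{Hⁿ(ds)} ≤ √(G_c(h,h)) ≤ C₁·‖h‖_{Hⁿ(ds)}, where ‖h‖²_{Hⁿ(ds)} = ∫₀^{2π} (|h(θ)|² + |D_c^n h(θ)|²)|c'(θ)| dθ. -/

import Mathlib

open scoped Real ENNReal ContDiff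
open MeasureTheory Function

/-- A smooth closed immersion: a smooth, 2π-periodic map `ℝ → ℝ^d` with
nowhere-vanishing derivative. -/
def SmoothClosedImmersion {d : ℕ} (c : ℝ → EuclideanSpace ℝ (Fin d)) : Prop :=
  ContDiff ℝ (⊤ : ℕ∞) c ∧ Function.Periodic c (2 * π) ∧ ∀ θ : ℝ, deriv c θ ≠ 0

/-- The arc-length derivative `D_c h = h' / |c'|` of a vector-valued function. -/
noncomputable def arcDerivV {d : ℕ} (c : ℝ → EuclideanSpace ℝ (Fin d))
    (h : ℝ → EuclideanSpace ℝ (Fin d)) : ℝ → EuclideanSpace ℝ (Fin d) :=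
  fun θ => (‖deriv c θ‖)⁻¹ • deriv h θ

/-- The arc-length derivative `D_c u = u' / |c'|` of a scalar function. -/
noncomputable def arcDerivS {d : ℕ} (c : ℝ → EuclideanSpace ℝ (Fin d))
    (u : ℝ → ℝ) : ℝ → ℝ :=
  fun θ => deriv u θ / ‖deriv c θ‖

/-- The Sobolev metric of order `n` with constant coefficients `a 0, …, a n`:
`G_c(h,h) = Σ_{j=0}^n a_j ∫₀^{2π} |D_c^j h|² |c'| dθ`. -/
noncomputable def sobolevG {d : ℕ} (n : ℕ) (a : ℕ → ℝ)
    (c h : ℝ → EuclideanSpace ℝ (Fin d)) : ℝ :=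
  ∑ j ∈ Finset.range (n + 1),
    a j * ∫ θ in (0:ℝ)..(2 * π), ‖(arcDerivV c)^[j] h θ‖ ^ 2 * ‖deriv c θ‖

/-- An admissible path of immersions joining `c₀` to `c₁`: a smooth map
`[0,1] × ℝ → ℝ^d` (smoothly extended to `ℝ × ℝ`), 2π-periodic in the second
variable, which is an immersion for every `t ∈ [0,1]`. -/
def IsAdmissiblePath {d : ℕ} (γ : ℝ → ℝ → EuclideanSpace ℝ (Fin d))
    (c₀ c₁ : ℝ → EuclideanSpace ℝ (Fin d)) : Prop :=
  ContDiff ℝ (⊤ : ℕ∞) (Function.uncurry γ) ∧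
  (∀ t : ℝ, Function.Periodic (γ t) (2 * π)) ∧
  (∀ t ∈ Set.Icc (0:ℝ) 1, ∀ θ : ℝ, deriv (γ t) θ ≠ 0) ∧
  γ 0 = c₀ ∧ γ 1 = c₁

/-- The length `∫₀¹ √(G_{γ(t)}(∂_t γ, ∂_t γ)) dt` of a path of curves. -/
noncomputable def pathLength {d : ℕ} (n : ℕ) (a : ℕ → ℝ)
    (γ : ℝ → ℝ → EuclideanSpace ℝ (Fin d)) : ℝ :=
  ∫ t in (0:ℝ)..1,
    Real.sqrt (sobolevG n a (γ t) (fun θ => deriv (fun s => γ s θ) t))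

/-- The geodesic distance (valued in `[0,∞]`) induced by the Sobolev metric:
the infimum of lengths of admissible paths of immersions joining `c₀` to `c₁`. -/
noncomputable def geodDist {d : ℕ} (n : ℕ) (a : ℕ → ℝ)
    (c₀ c₁ : ℝ → EuclideanSpace ℝ (Fin d)) : ℝ≥0∞ :=
  ⨅ (γ : ℝ → ℝ → EuclideanSpace ℝ (Fin d)) (_ : IsAdmissiblePath γ c₀ c₁),
    ENNReal.ofReal (pathLength n a γ)

/-- The `Hⁿ(ds)`-norm `(∫₀^{2π} (|h|² + |D_c^n h|²)|c'| dθ)^{1/2}`. -/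
noncomputable def HnDsNorm {d : ℕ} (n : ℕ) (c h : ℝ → EuclideanSpace ℝ (Fin d)) : ℝ :=
  Real.sqrt (∫ θ in (0:ℝ)..(2 * π),
    (‖h θ‖ ^ 2 + ‖(arcDerivV c)^[n] h θ‖ ^ 2) * ‖deriv c θ‖)

section helpers

lemma periodic_deriv' {E : Type*} [NormedAddCommGroup E] [NormedSpace ℝ E]
    {f : ℝ → E} {T : ℝ} (hf : Function.Periodic f T) :
    Function.Periodic (deriv f) T := fun x => by
  have hfe : (fun y => f (y + T)) = f := funext hf
  rw [← deriv_comp_add_const (f := f) (a := T), hfe]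

variable {d : ℕ} {c h : ℝ → EuclideanSpace ℝ (Fin d)}

lemma iter_smooth_periodic (hc : ContDiff ℝ ∞ c) (hc0 : ∀ θ, deriv c θ ≠ 0)
    (hcp : Function.Periodic c (2 * π)) (hh : ContDiff ℝ ∞ h)
    (hhp : Function.Periodic h (2 * π)) (j : ℕ) :
    ContDiff ℝ ∞ ((arcDerivV c)^[j] h) ∧
      Function.Periodic ((arcDerivV c)^[j] h) (2 * π) := by
  have hdc : ContDiff ℝ ∞ (deriv c) := (contDiff_infty_iff_deriv.mp hc).2
  have hρ : ContDiff ℝ ∞ (fun θ => ‖deriv c θ‖) := hdc.norm ℝ hc0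
  have hρinv : ContDiff ℝ ∞ (fun θ => (‖deriv c θ‖)⁻¹) :=
    hρ.inv (fun θ => norm_ne_zero_iff.mpr (hc0 θ))
  have hρp : Function.Periodic (fun θ => (‖deriv c θ‖)⁻¹) (2 * π) := fun x => by
    simp only [(periodic_deriv' hcp) x]
  induction j with
  | zero => exact ⟨hh, hhp⟩
  | succ j ih =>
    rw [Function.iterate_succ_apply']
    obtain ⟨ihs, ihp⟩ := ih
    constructor
    · exact hρinv.smul (contDiff_infty_iff_deriv.mp ihs).2
    · intro x
      simp only [arcDerivV]
      rw [(periodic_deriv' hcp) x, (periodic_deriv' ihp) x]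

lemma iter_deriv_eq (hc0 : ∀ θ, deriv c θ ≠ 0) (j : ℕ) (θ : ℝ) :
    deriv ((arcDerivV c)^[j] h) θ = ‖deriv c θ‖ • (arcDerivV c)^[j+1] h θ := by
  rw [Function.iterate_succ_apply']
  simp only [arcDerivV]
  rw [smul_inv_smul₀ (norm_ne_zero_iff.mpr (hc0 θ))]

lemma key_convexity (hc : ContDiff ℝ ∞ c) (hc0 : ∀ θ, deriv c θ ≠ 0)
    (hcp : Function.Periodic c (2 * π)) (hh : ContDiff ℝ ∞ h)
    (hhp : Function.Periodic h (2 * π)) (j : ℕ) :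
    2 * ∫ θ in (0:ℝ)..(2 * π), ‖(arcDerivV c)^[j+1] h θ‖ ^ 2 * ‖deriv c θ‖ ≤
      (∫ θ in (0:ℝ)..(2 * π), ‖(arcDerivV c)^[j] h θ‖ ^ 2 * ‖deriv c θ‖) +
      ∫ θ in (0:ℝ)..(2 * π), ‖(arcDerivV c)^[j+2] h θ‖ ^ 2 * ‖deriv c θ‖ := by
  set u := (arcDerivV c)^[j] h with hu
  set v := (arcDerivV c)^[j+1] h with hv
  set w := (arcDerivV c)^[j+2] h with hw
  have hρ : Continuous (fun θ => ‖deriv c θ‖) :=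
    ((contDiff_infty_iff_deriv.mp hc).2.continuous).norm
  have hus := iter_smooth_periodic hc hc0 hcp hh hhp j
  have hvs := iter_smooth_periodic hc hc0 hcp hh hhp (j+1)
  have hws := iter_smooth_periodic hc hc0 hcp hh hhp (j+2)
  have hud : ∀ θ, HasDerivAt u (‖deriv c θ‖ • v θ) θ := fun θ => by
    have := (hus.1.differentiable (by simp) θ).hasDerivAt
    rwa [iter_deriv_eq hc0 j θ] at this
  have hvd : ∀ θ, HasDerivAt v (‖deriv c θ‖ • w θ) θ := fun θ => by
    have := (hvs.1.differentiable (by simp) θ).hasDerivAt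
    rwa [iter_deriv_eq hc0 (j+1) θ] at this
  -- g = ⟪v, u⟫ and its derivative
  set g : ℝ → ℝ := fun θ => inner ℝ (v θ) (u θ) with hg
  have hgd : ∀ θ, HasDerivAt g
      (‖v θ‖ ^ 2 * ‖deriv c θ‖ + (inner ℝ (w θ) (u θ) : ℝ) * ‖deriv c θ‖) θ := by
    intro θ
    have := HasDerivAt.inner ℝ (hvd θ) (hud θ)
    refine this.congr_deriv ?_
    rw [real_inner_smul_right, real_inner_smul_left, real_inner_self_eq_norm_sq]
    ring
  have hup : Function.Periodic u (2 * π) := hus.2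
  have hvp : Function.Periodic v (2 * π) := hvs.2
  have hgp : Function.Periodic g (2 * π) := fun x => by
    simp only [hg, hvp x, hup x]
  have hcu : Continuous u := hus.1.continuous
  have hcv : Continuous v := hvs.1.continuous
  have hcw : Continuous w := hws.1.continuous
  have hcont : Continuous (fun θ => ‖v θ‖ ^ 2 * ‖deriv c θ‖ +
      (inner ℝ (w θ) (u θ) : ℝ) * ‖deriv c θ‖) :=
    ((hcv.norm.pow 2).mul hρ).add ((hcw.inner hcu).mul hρ)
  have hint : (∫ θ in (0:ℝ)..(2 * π), (‖v θ‖ ^ 2 * ‖deriv c θ‖ +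
      (inner ℝ (w θ) (u θ) : ℝ) * ‖deriv c θ‖)) = 0 := by
    rw [intervalIntegral.integral_eq_sub_of_hasDerivAt
      (fun x _ => hgd x) (hcont.intervalIntegrable _ _)]
    have := hgp 0
    simp only [zero_add] at this
    rw [this, sub_self]
  have hcv2 : Continuous (fun θ => ‖v θ‖ ^ 2 * ‖deriv c θ‖) :=
    (hcv.norm.pow 2).mul hρ
  have hcwu : Continuous (fun θ => (inner ℝ (w θ) (u θ) : ℝ) * ‖deriv c θ‖) :=
    (hcw.inner hcu).mul hρ
  rw [intervalIntegral.integral_add (hcv2.intervalIntegrable _ _)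
    (hcwu.intervalIntegrable _ _)] at hint
  have hAv : (∫ θ in (0:ℝ)..(2 * π), ‖v θ‖ ^ 2 * ‖deriv c θ‖) =
      - ∫ θ in (0:ℝ)..(2 * π), (inner ℝ (w θ) (u θ) : ℝ) * ‖deriv c θ‖ := by
    linarith
  -- pointwise bound
  have hpt : (∫ θ in (0:ℝ)..(2 * π), (-((inner ℝ (w θ) (u θ) : ℝ) * ‖deriv c θ‖))) ≤
      ∫ θ in (0:ℝ)..(2 * π),
        ((‖u θ‖ ^ 2 * ‖deriv c θ‖ + ‖w θ‖ ^ 2 * ‖deriv c θ‖) / 2) := by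
    apply intervalIntegral.integral_mono_on (by positivity)
      ((hcwu.neg).intervalIntegrable _ _)
    · have hcu2 : Continuous (fun θ => ‖u θ‖ ^ 2 * ‖deriv c θ‖) := by
        have := hus.1.continuous; fun_prop
      have hcw2 : Continuous (fun θ => ‖w θ‖ ^ 2 * ‖deriv c θ‖) := by
        have := hws.1.continuous; fun_prop
      exact (((hcu2.add hcw2).div_const 2).intervalIntegrable _ _)
    · intro x _
      have h1 : -(inner ℝ (w x) (u x) : ℝ) ≤ ‖w x‖ * ‖u x‖ := by
        have := abs_real_inner_le_norm (w x) (u x)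
        have := abs_le.mp this
        linarith [this.1]
      have h2 : ‖w x‖ * ‖u x‖ ≤ (‖u x‖ ^ 2 + ‖w x‖ ^ 2) / 2 := by
        nlinarith [sq_nonneg (‖u x‖ - ‖w x‖)]
      have hρ0 : (0:ℝ) ≤ ‖deriv c x‖ := norm_nonneg _
      show -(inner ℝ (w x) (u x) * ‖deriv c x‖) ≤ _
      nlinarith
  rw [intervalIntegral.integral_neg] at hpt
  have hsplit : (∫ θ in (0:ℝ)..(2 * π),
      ((‖u θ‖ ^ 2 * ‖deriv c θ‖ + ‖w θ‖ ^ 2 * ‖deriv c θ‖) / 2)) =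
      ((∫ θ in (0:ℝ)..(2 * π), ‖u θ‖ ^ 2 * ‖deriv c θ‖) +
       ∫ θ in (0:ℝ)..(2 * π), ‖w θ‖ ^ 2 * ‖deriv c θ‖) / 2 := by
    have hcu2 : Continuous (fun θ => ‖u θ‖ ^ 2 * ‖deriv c θ‖) :=
      (hcu.norm.pow 2).mul hρ
    have hcw2 : Continuous (fun θ => ‖w θ‖ ^ 2 * ‖deriv c θ‖) :=
      (hcw.norm.pow 2).mul hρ
    rw [intervalIntegral.integral_div,
      intervalIntegral.integral_add (hcu2.intervalIntegrable _ _)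
        (hcw2.intervalIntegrable _ _)]
  rw [hsplit] at hpt
  linarith [hAv, hpt]

end helpers

lemma convex_seq_le {B : ℕ → ℝ} {n : ℕ} (hB0 : ∀ j, j ≤ n → 0 ≤ B j)
    (hconv : ∀ i, i + 2 ≤ n → 2 * B (i + 1) ≤ B i + B (i + 2)) :
    ∀ j, j ≤ n → B j ≤ B 0 + B n := by
  -- difference sequence is monotone
  have hD : ∀ k, k + 1 ≤ n → ∀ i, i ≤ k → B (i + 1) - B i ≤ B (k + 1) - B k := by
    intro k
    induction k with
    | zero =>
      intro _ i hik
      obtain rfl : i = 0 := Nat.le_zero.mp hik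
      exact le_rfl
    | succ k ih =>
      intro hk1 i hik
      rcases Nat.lt_or_ge i (k + 1) with hlt | hge
      · have h1 := ih (by omega) i (Nat.lt_succ_iff.mp hlt)
        have h2 := hconv k (by omega)
        linarith
      · obtain rfl : i = k + 1 := le_antisymm hik hge
        exact le_rfl
  intro j hj
  rcases Nat.eq_zero_or_pos j with rfl | hj0
  · linarith [hB0 n le_rfl]
  rcases Nat.lt_or_ge j n with hjn | hjn
  swap
  · obtain rfl : j = n := le_antisymm hj hjn
    linarith [hB0 0 (Nat.zero_le _)]
  -- 0 < j < n
  obtain ⟨m, rfl⟩ : ∃ m, j = m + 1 := ⟨j - 1, by omega⟩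
  set j := m + 1
  have hsum1 : B j - B 0 = ∑ i ∈ Finset.range j, (B (i + 1) - B i) :=
    (Finset.sum_range_sub B j).symm
  have hub1 : ∀ i ∈ Finset.range j, B (i + 1) - B i ≤ B (m + 1) - B m := by
    intro i hi
    exact hD m (by omega) i (by have := Finset.mem_range.mp hi; omega)
  have h1 : B j - B 0 ≤ (j : ℝ) * (B (m + 1) - B m) := by
    rw [hsum1]
    calc ∑ i ∈ Finset.range j, (B (i + 1) - B i)
        ≤ Finset.card (Finset.range j) • (B (m + 1) - B m) :=
          Finset.sum_le_card_nsmul _ _ _ hub1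
      _ = (j : ℝ) * (B (m + 1) - B m) := by
          simp [Finset.card_range, nsmul_eq_mul]
  have hsum2 : B n - B j = ∑ i ∈ Finset.range (n - j), (B (j + (i + 1)) - B (j + i)) := by
    have h := Finset.sum_range_sub (fun i => B (j + i)) (n - j)
    simp only [Nat.add_sub_cancel' (le_of_lt hjn), add_zero] at h
    exact h.symm
  have hlb2 : ∀ i ∈ Finset.range (n - j), B (m + 1) - B m ≤ B (j + (i + 1)) - B (j + i) := by
    intro i hi
    have hi' := Finset.mem_range.mp hi
    have := hD (j + i) (by omega) m (by omega)
    rwa [← add_assoc]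
  have h2 : ((n - j : ℕ) : ℝ) * (B (m + 1) - B m) ≤ B n - B j := by
    rw [hsum2]
    calc ((n - j : ℕ) : ℝ) * (B (m + 1) - B m)
        = Finset.card (Finset.range (n - j)) • (B (m + 1) - B m) := by
          simp [Finset.card_range, nsmul_eq_mul]
      _ ≤ _ := Finset.card_nsmul_le_sum _ _ _ hlb2
  -- chord bound
  have hjr : (0:ℝ) < (j:ℝ) := by exact_mod_cast Nat.succ_pos m
  have hnjr : (0:ℝ) < ((n - j : ℕ) : ℝ) := by
    have : 0 < n - j := by omega
    exact_mod_cast this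
  have hB0' := hB0 0 (Nat.zero_le n)
  have hBn' := hB0 n le_rfl
  have hchord : ((n - j : ℕ) : ℝ) * (B j - B 0) ≤ (j : ℝ) * (B n - B j) := by
    calc ((n - j : ℕ) : ℝ) * (B j - B 0)
        ≤ ((n - j : ℕ) : ℝ) * ((j : ℝ) * (B (m + 1) - B m)) := by
          apply mul_le_mul_of_nonneg_left h1 (le_of_lt hnjr)
      _ = (j : ℝ) * (((n - j : ℕ) : ℝ) * (B (m + 1) - B m)) := by ring
      _ ≤ (j : ℝ) * (B n - B j) := mul_le_mul_of_nonneg_left h2 (le_of_lt hjr)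
  nlinarith [hchord, hB0' , hBn', hjr, hnjr]


/-- a Sobolev metric of order `n ≥ 2` with constant coefficients
is uniformly equivalent to the `Hⁿ(ds)`-norm. -/
theorem stmt12 (d : ℕ) (hd : 1 ≤ d) (n : ℕ) (hn : 2 ≤ n)
    (a : ℕ → ℝ) (ha : ∀ j ≤ n, 0 ≤ a j) (ha0 : 0 < a 0) (han : 0 < a n) :
    ∃ C₁ : ℝ, 1 ≤ C₁ ∧ ∀ c h : ℝ → EuclideanSpace ℝ (Fin d),
      SmoothClosedImmersion c →
      ContDiff ℝ (⊤ : ℕ∞) h → Function.Periodic h (2 * π) →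
      C₁⁻¹ * HnDsNorm n c h ≤ Real.sqrt (sobolevG n a c h) ∧
      Real.sqrt (sobolevG n a c h) ≤ C₁ * HnDsNorm n c h := by
  simp only [SmoothClosedImmersion, HnDsNorm, sobolevG]
  set S : ℝ := ∑ j ∈ Finset.range (n + 1), a j with hS
  have hS0 : 0 < S := by
    have h1 : a 0 ≤ S := by
      apply Finset.single_le_sum (f := a) ?_ (Finset.mem_range.mpr (show 0 < n + 1 by omega))
      intro j hj
      exact ha j (Nat.lt_succ_iff.mp (Finset.mem_range.mp hj))
    linarith
  set m : ℝ := min (a 0) (a n) with hm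
  have hm0 : 0 < m := lt_min ha0 han
  set C₁ : ℝ := max 1 (Real.sqrt (max S m⁻¹)) with hC₁
  have hC1 : 1 ≤ C₁ := le_max_left _ _
  have hC0 : 0 < C₁ := lt_of_lt_of_le one_pos hC1
  refine ⟨C₁, hC1, ?_⟩
  intro c h hc hh hhp
  obtain ⟨hc1, hcp, hc0⟩ := hc
  have hcs : ContDiff ℝ ∞ c := hc1.of_le (by simp)
  have hhs : ContDiff ℝ ∞ h := hh.of_le (by simp)
  set A : ℕ → ℝ := fun j =>
    ∫ θ in (0:ℝ)..(2 * π), ‖(arcDerivV c)^[j] h θ‖ ^ 2 * ‖deriv c θ‖ with hA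
  have hρ : Continuous (fun θ => ‖deriv c θ‖) :=
    ((contDiff_infty_iff_deriv.mp hcs).2.continuous).norm
  have hAint : ∀ j, IntervalIntegrable
      (fun θ => ‖(arcDerivV c)^[j] h θ‖ ^ 2 * ‖deriv c θ‖) volume 0 (2 * π) := fun j =>
    ((((iter_smooth_periodic hcs hc0 hcp hhs hhp j).1.continuous.norm.pow 2).mul
      hρ).intervalIntegrable _ _)
  have hA0 : ∀ j, 0 ≤ A j := fun j =>
    intervalIntegral.integral_nonneg (by positivity) (fun x _ => by positivity)
  have hkey : ∀ j, j ≤ n → A j ≤ A 0 + A n :=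
    convex_seq_le (fun j _ => hA0 j)
      (fun i _ => key_convexity hcs hc0 hcp hhs hhp i)
  set T : ℝ := A 0 + A n with hTdef
  have hT0 : 0 ≤ T := add_nonneg (hA0 0) (hA0 n)
  have hT : (∫ θ in (0:ℝ)..(2 * π),
      (‖h θ‖ ^ 2 + ‖(arcDerivV c)^[n] h θ‖ ^ 2) * ‖deriv c θ‖) = T := by
    rw [hTdef, hA]
    rw [← intervalIntegral.integral_add (hAint 0) (hAint n)]
    apply intervalIntegral.integral_congr
    intro θ _
    simp only [Function.iterate_zero, id_eq]
    ring
  set G : ℝ := ∑ j ∈ Finset.range (n + 1),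
    a j * ∫ θ in (0:ℝ)..(2 * π), ‖(arcDerivV c)^[j] h θ‖ ^ 2 * ‖deriv c θ‖ with hG
  have hGA : G = ∑ j ∈ Finset.range (n + 1), a j * A j := rfl
  -- upper bound
  have hupper : G ≤ S * T := by
    rw [hGA]
    calc ∑ j ∈ Finset.range (n + 1), a j * A j
        ≤ ∑ j ∈ Finset.range (n + 1), a j * T := by
          apply Finset.sum_le_sum
          intro j hj
          have hjn := Nat.lt_succ_iff.mp (Finset.mem_range.mp hj)
          exact mul_le_mul_of_nonneg_left (hkey j hjn) (ha j hjn)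
      _ = S * T := by rw [hS, Finset.sum_mul]
  -- lower bound
  have hlower : m * T ≤ G := by
    have hsub : ({0, n} : Finset ℕ) ⊆ Finset.range (n + 1) := by
      intro x hx
      simp only [Finset.mem_insert, Finset.mem_singleton] at hx
      rcases hx with rfl | rfl <;> exact Finset.mem_range.mpr (by omega)
    have hle : ∑ j ∈ ({0, n} : Finset ℕ), a j * A j ≤ G := by
      rw [hGA]
      apply Finset.sum_le_sum_of_subset_of_nonneg hsub
      intro j hj _
      exact mul_nonneg (ha j (Nat.lt_succ_iff.mp (Finset.mem_range.mp hj))) (hA0 j)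
    rw [Finset.sum_pair (show (0:ℕ) ≠ n by omega)] at hle
    have h1 : m ≤ a 0 := min_le_left _ _
    have h2 : m ≤ a n := min_le_right _ _
    nlinarith [hA0 0, hA0 n]
  have hG0 : 0 ≤ G := le_trans (by positivity) hlower
  rw [hT]
  constructor
  · -- C₁⁻¹ * √T ≤ √G
    rw [inv_mul_le_iff₀ hC0]
    have h1 : Real.sqrt T = Real.sqrt m⁻¹ * Real.sqrt (m * T) := by
      rw [← Real.sqrt_mul (by positivity), inv_mul_cancel_left₀ (ne_of_gt hm0)]
    rw [h1]
    have h2 : Real.sqrt (m * T) ≤ Real.sqrt G := Real.sqrt_le_sqrt hlower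
    have h3 : Real.sqrt m⁻¹ ≤ C₁ :=
      le_trans (Real.sqrt_le_sqrt (le_max_right S m⁻¹)) (le_max_right _ _)
    calc Real.sqrt m⁻¹ * Real.sqrt (m * T)
        ≤ Real.sqrt m⁻¹ * Real.sqrt G :=
          mul_le_mul_of_nonneg_left h2 (Real.sqrt_nonneg _)
      _ ≤ C₁ * Real.sqrt G := mul_le_mul_of_nonneg_right h3 (Real.sqrt_nonneg _)
  · -- √G ≤ C₁ * √T
    have h1 : Real.sqrt G ≤ Real.sqrt (S * T) := Real.sqrt_le_sqrt hupper
    rw [Real.sqrt_mul (le_of_lt hS0)] at h1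
    have h2 : Real.sqrt S ≤ C₁ :=
      le_trans (Real.sqrt_le_sqrt (le_max_left S m⁻¹)) (le_max_right _ _)
    calc Real.sqrt G ≤ Real.sqrt S * Real.sqrt T := h1
      _ ≤ C₁ * Real.sqrt T := mul_le_mul_of_nonneg_right h2 (Real.sqrt_nonneg _)
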